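/- arXiv:1805.03193 — 4 statements merged into one kernel-verified Lean document; each statement's English description precedes it below -/
import Mathlib

section
/- Let X^n, Y^n, M, W1, W2 be finite-valued random variables such that W1 is independent of W2 and X^n − (M,W1) − (M,W2) − Y^n is a Markov chain. Then I(X^n; Y^n | M) ≤ H(M). In particular, if M takes at most 2^{nR} values, then I(X^n; Y^n | M) ≤ nR. -/
open scoped BigOperators

/-- A probability mass function on a finite sample space. -/
structure FinPMF (Ω : Type*) [Fintype Ω] where
  p : Ω → ℝ
  nonneg : ∀ ω, 0 ≤ p ω
  sum_one : ∑ ω, p ω = 1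

namespace FinPMF

variable {Ω : Type*} [Fintype Ω]

/-- Probability that the random variable `X` takes the value `a`. -/
def pr (μ : FinPMF Ω) {A : Type*} [DecidableEq A] (X : Ω → A) (a : A) : ℝ :=
  ∑ ω, if X ω = a then μ.p ω else 0

/-- Shannon entropy (base 2, i.e. in bits) of the random variable `X`. -/
noncomputable def H (μ : FinPMF Ω) {A : Type*} [Fintype A] [DecidableEq A]
    (X : Ω → A) : ℝ :=
  -∑ a, μ.pr X a * Real.logb 2 (μ.pr X a)

/-- Conditional entropy `H(X|Z)`. -/
noncomputable def CondH (μ : FinPMF Ω) {A C : Type*} [Fintype A] [DecidableEq A]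
    [Fintype C] [DecidableEq C] (X : Ω → A) (Z : Ω → C) : ℝ :=
  μ.H (fun ω => (X ω, Z ω)) - μ.H Z

/-- Mutual information `I(X;Y)`. -/
noncomputable def I2 (μ : FinPMF Ω) {A B : Type*} [Fintype A] [DecidableEq A]
    [Fintype B] [DecidableEq B] (X : Ω → A) (Y : Ω → B) : ℝ :=
  μ.H X + μ.H Y - μ.H (fun ω => (X ω, Y ω))

/-- Conditional mutual information `I(X;Y|Z)`. -/
noncomputable def CI (μ : FinPMF Ω) {A B C : Type*} [Fintype A] [DecidableEq A]
    [Fintype B] [DecidableEq B] [Fintype C] [DecidableEq C]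
    (X : Ω → A) (Y : Ω → B) (Z : Ω → C) : ℝ :=
  μ.H (fun ω => (X ω, Z ω)) + μ.H (fun ω => (Y ω, Z ω))
    - μ.H (fun ω => (X ω, Y ω, Z ω)) - μ.H Z

/-- `X` and `Y` are independent. -/
def Indep (μ : FinPMF Ω) {A B : Type*} [DecidableEq A] [DecidableEq B]
    (X : Ω → A) (Y : Ω → B) : Prop :=
  ∀ a b, μ.pr (fun ω => (X ω, Y ω)) (a, b) = μ.pr X a * μ.pr Y b

/-- `X` and `Y` are conditionally independent given `Z` (Markov chain `X − Z − Y`). -/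
def CondIndep (μ : FinPMF Ω) {A B C : Type*} [DecidableEq A] [DecidableEq B]
    [DecidableEq C] (X : Ω → A) (Y : Ω → B) (Z : Ω → C) : Prop :=
  ∀ a b c, μ.pr (fun ω => (X ω, Y ω, Z ω)) (a, b, c) * μ.pr Z c
    = μ.pr (fun ω => (X ω, Z ω)) (a, c) * μ.pr (fun ω => (Y ω, Z ω)) (b, c)

end FinPMF

/-- Binary entropy function (base 2). -/
noncomputable def binEnt (t : ℝ) : ℝ :=
  -(t * Real.logb 2 t) - (1 - t) * Real.logb 2 (1 - t)

/-!
Enlarging both arguments, `I(Xⁿ; Yⁿ | M) ≤ I(W₁ Xⁿ; W₂ Yⁿ | M)`, and the chain rule splits the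
right-hand side as `I(W₁; W₂ | M) + I(W₁; Yⁿ | M W₂) + I(Xⁿ; W₂ Yⁿ | M W₁)`. The Markov condition
makes the last two terms vanish, and independence of `W₁` and `W₂` gives
`I(W₁; W₂ | M) ≤ H(M) + I(W₁; W₂) = H(M)`. Finally `H(M) ≤ log₂ |𝓜| ≤ nR`.
-/

theorem sum_mul_logb_le_sum_mul_logb {ι : Type*} [Fintype ι] {p q : ι → ℝ}
    (hp : ∀ i, 0 ≤ p i) (hq : ∀ i, 0 ≤ q i) (hpq : ∀ i, 0 < p i → 0 < q i)
    (hsum : ∑ i, q i ≤ ∑ i, p i) :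
    ∑ i, p i * Real.logb 2 (q i) ≤ ∑ i, p i * Real.logb 2 (p i) := by
  have hlog2 : 0 < Real.log 2 := Real.log_pos one_lt_two
  have key (i : ι) :
      p i * Real.logb 2 (q i) - p i * Real.logb 2 (p i) ≤ (q i - p i) / Real.log 2 := by
    rcases (hp i).eq_or_lt with hpi | hpi
    · simpa [← hpi] using div_nonneg (hq i) hlog2.le
    have hqi := hpq i hpi
    rw [← mul_sub, ← Real.logb_div hqi.ne' hpi.ne', Real.logb, ← mul_div_assoc]
    gcongr
    calc p i * Real.log (q i / p i) ≤ p i * (q i / p i - 1) := by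
          gcongr; exact Real.log_le_sub_one_of_pos (div_pos hqi hpi)
      _ = q i - p i := by field_simp
  have := Finset.sum_le_sum fun i (_ : i ∈ Finset.univ) => key i
  rw [← Finset.sum_div, Finset.sum_sub_distrib, Finset.sum_sub_distrib] at this
  have : (∑ i, q i - ∑ i, p i) / Real.log 2 ≤ 0 :=
    div_nonpos_of_nonpos_of_nonneg (by linarith) hlog2.le
  linarith

namespace FinPMF

variable {Ω : Type*} [Fintype Ω]

theorem nonempty (μ : FinPMF Ω) : Nonempty Ω := by
  rcases isEmpty_or_nonempty Ω with h | h
  · simpa using μ.sum_one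
  · exact h

variable (μ : FinPMF Ω)

section Probability

variable {A B : Type*} [DecidableEq A] [DecidableEq B]

theorem pr_nonneg (X : Ω → A) (a : A) : 0 ≤ μ.pr X a :=
  Finset.sum_nonneg fun ω _ => by split_ifs <;> simp [μ.nonneg]

theorem pr_le_pr_of_imp {X : Ω → A} {Y : Ω → B} {a : A} {b : B}
    (h : ∀ ω, X ω = a → Y ω = b) : μ.pr X a ≤ μ.pr Y b :=
  Finset.sum_le_sum fun ω _ => by
    by_cases hX : X ω = a
    · simp [hX, h ω hX]
    · simp only [hX, if_false]
      split_ifs <;> simp [μ.nonneg]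

theorem pr_congr {X : Ω → A} {Y : Ω → B} {a : A} {b : B}
    (h : ∀ ω, X ω = a ↔ Y ω = b) : μ.pr X a = μ.pr Y b :=
  Finset.sum_congr rfl fun ω _ => by simp only [h ω]

theorem pr_eq_zero_of_imp {X : Ω → A} {Y : Ω → B} {a : A} {b : B}
    (h : ∀ ω, X ω = a → Y ω = b) (hb : μ.pr Y b = 0) : μ.pr X a = 0 :=
  le_antisymm (hb ▸ μ.pr_le_pr_of_imp h) (μ.pr_nonneg X a)

theorem p_le_pr_apply (X : Ω → A) (ω : Ω) : μ.p ω ≤ μ.pr X (X ω) := by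
  simpa [pr] using Finset.single_le_sum (f := fun ω' => if X ω' = X ω then μ.p ω' else 0)
    (fun ω' _ => by split_ifs <;> simp [μ.nonneg]) (Finset.mem_univ ω)

theorem pr_const : μ.pr (fun _ => ()) () = 1 := by
  simpa [pr] using μ.sum_one

theorem sum_pr_prod_left [Fintype A] (X : Ω → A) (Y : Ω → B) (b : B) :
    ∑ a, μ.pr (fun ω => (X ω, Y ω)) (a, b) = μ.pr Y b := by
  simp only [pr, Prod.mk.injEq]
  rw [Finset.sum_comm]
  refine Finset.sum_congr rfl fun ω _ => ?_
  by_cases hY : Y ω = b <;> simp [hY]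

theorem sum_pr_mul [Fintype A] (X : Ω → A) (f : A → ℝ) :
    ∑ a, μ.pr X a * f a = ∑ ω, μ.p ω * f (X ω) := by
  simp only [pr, Finset.sum_mul, ite_mul, zero_mul]
  rw [Finset.sum_comm]
  simp

theorem sum_pr [Fintype A] (X : Ω → A) : ∑ a, μ.pr X a = 1 := by
  simpa [μ.sum_one] using μ.sum_pr_mul X 1

end Probability

section Entropy

variable {A B C : Type*} [Fintype A] [DecidableEq A] [Fintype B] [DecidableEq B]
  [Fintype C] [DecidableEq C]

theorem H_eq_sum (X : Ω → A) : μ.H X = -∑ ω, μ.p ω * Real.logb 2 (μ.pr X (X ω)) :=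
  congrArg Neg.neg (μ.sum_pr_mul X fun a => Real.logb 2 (μ.pr X a))

theorem H_le_H_of_eq_imp_eq {X : Ω → A} {Y : Ω → B}
    (h : ∀ ω ω', Y ω' = Y ω → X ω' = X ω) : μ.H X ≤ μ.H Y := by
  rw [H_eq_sum, H_eq_sum, neg_le_neg_iff]
  refine Finset.sum_le_sum fun ω _ => ?_
  rcases (μ.nonneg ω).eq_or_lt with hω | hω
  · simp [← hω]
  have hY := hω.trans_le (μ.p_le_pr_apply Y ω)
  gcongr
  · exact one_lt_two
  · exact μ.pr_le_pr_of_imp (h ω)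

theorem H_congr {X : Ω → A} {Y : Ω → B} (h : ∀ ω ω', X ω = X ω' ↔ Y ω = Y ω') :
    μ.H X = μ.H Y :=
  le_antisymm (μ.H_le_H_of_eq_imp_eq fun ω ω' => (h ω' ω).2)
    (μ.H_le_H_of_eq_imp_eq fun ω ω' => (h ω' ω).1)

theorem H_le_logb_card (X : Ω → A) : μ.H X ≤ Real.logb 2 (Fintype.card A) := by
  have hgibbs := sum_mul_logb_le_sum_mul_logb (p := μ.pr X)
    (q := fun _ => (Fintype.card A : ℝ)⁻¹) (μ.pr_nonneg X) (fun _ => by positivity)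
    (fun a _ => inv_pos.2 (Nat.cast_pos.2 (Fintype.card_pos_iff.2 ⟨a⟩)))
    (by rw [μ.sum_pr, Finset.sum_const, Finset.card_univ, nsmul_eq_mul]; exact mul_inv_le_one)
  rw [← Finset.sum_mul, μ.sum_pr, Real.logb_inv] at hgibbs
  rw [H]
  linarith

theorem H_le_of_card_le_two_rpow (X : Ω → A) {r : ℝ} (hr : (Fintype.card A : ℝ) ≤ 2 ^ r) :
    μ.H X ≤ r := by
  obtain ⟨ω⟩ := μ.nonempty
  have hA : (0 : ℝ) < Fintype.card A := Nat.cast_pos.2 (Fintype.card_pos_iff.2 ⟨X ω⟩)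
  calc μ.H X ≤ Real.logb 2 (Fintype.card A) := μ.H_le_logb_card X
    _ ≤ Real.logb 2 (2 ^ r) := Real.logb_le_logb_of_le one_lt_two hA hr
    _ = r := Real.logb_rpow two_pos one_lt_two.ne'

theorem CI_eq_sum (X : Ω → A) (Y : Ω → B) (Z : Ω → C) :
    μ.CI X Y Z = ∑ ω, μ.p ω *
      (Real.logb 2 (μ.pr (fun ω => (X ω, Y ω, Z ω)) (X ω, Y ω, Z ω))
        + Real.logb 2 (μ.pr Z (Z ω))
        - Real.logb 2 (μ.pr (fun ω => (X ω, Z ω)) (X ω, Z ω))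
        - Real.logb 2 (μ.pr (fun ω => (Y ω, Z ω)) (Y ω, Z ω))) := by
  simp only [CI, H_eq_sum, mul_add, mul_sub, Finset.sum_add_distrib, Finset.sum_sub_distrib]
  ring

theorem CI_nonneg (X : Ω → A) (Y : Ω → B) (Z : Ω → C) : 0 ≤ μ.CI X Y Z := by
  -- Gibbs' inequality against `q(a,b,c) = p(a,c) p(b,c) / p(c)`, which sums to one.
  let q : A × B × C → ℝ := fun t =>
    μ.pr (fun ω => (X ω, Z ω)) (t.1, t.2.2) * μ.pr (fun ω => (Y ω, Z ω)) (t.2.1, t.2.2)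
      / μ.pr Z t.2.2
  have hq_nonneg (t) : 0 ≤ q t :=
    div_nonneg (mul_nonneg (μ.pr_nonneg _ _) (μ.pr_nonneg _ _)) (μ.pr_nonneg _ _)
  have hq_pos (t) (ht : 0 < μ.pr (fun ω => (X ω, Y ω, Z ω)) t) : 0 < q t := by
    obtain ⟨a, b, c⟩ := t
    have hXZ := ht.trans_le (μ.pr_le_pr_of_imp (Y := fun ω => (X ω, Z ω)) (b := (a, c))
      fun ω h => by simp_all)
    have hYZ := ht.trans_le (μ.pr_le_pr_of_imp (Y := fun ω => (Y ω, Z ω)) (b := (b, c))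
      fun ω h => by simp_all)
    have hZ := ht.trans_le (μ.pr_le_pr_of_imp (Y := Z) (b := c) fun ω h => by simp_all)
    positivity
  have hq_sum : ∑ t, q t = 1 := calc
    ∑ t, q t = ∑ c, (∑ a, μ.pr (fun ω => (X ω, Z ω)) (a, c))
        * (∑ b, μ.pr (fun ω => (Y ω, Z ω)) (b, c)) / μ.pr Z c := by
      simp only [q, Fintype.sum_prod_type_right, Finset.sum_mul, Finset.mul_sum, Finset.sum_div]
    _ = ∑ c, μ.pr Z c := by simp only [sum_pr_prod_left, mul_self_div_self]
    _ = 1 := μ.sum_pr Z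
  have hcross : ∑ t, μ.pr (fun ω => (X ω, Y ω, Z ω)) t * Real.logb 2 (q t)
      = μ.H Z - μ.H (fun ω => (X ω, Z ω)) - μ.H (fun ω => (Y ω, Z ω)) := by
    have hterm (ω : Ω) : μ.p ω * Real.logb 2 (q (X ω, Y ω, Z ω))
        = μ.p ω * Real.logb 2 (μ.pr (fun ω => (X ω, Z ω)) (X ω, Z ω))
          + μ.p ω * Real.logb 2 (μ.pr (fun ω => (Y ω, Z ω)) (Y ω, Z ω))
          - μ.p ω * Real.logb 2 (μ.pr Z (Z ω)) := by
      rcases (μ.nonneg ω).eq_or_lt with hω | hω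
      · simp [← hω]
      have hXZ := hω.trans_le (μ.p_le_pr_apply (fun ω => (X ω, Z ω)) ω)
      have hYZ := hω.trans_le (μ.p_le_pr_apply (fun ω => (Y ω, Z ω)) ω)
      have hZ := hω.trans_le (μ.p_le_pr_apply Z ω)
      dsimp only [q]
      rw [Real.logb_div (by positivity) hZ.ne', Real.logb_mul hXZ.ne' hYZ.ne']
      ring
    rw [μ.sum_pr_mul _ fun t => Real.logb 2 (q t), H_eq_sum, H_eq_sum, H_eq_sum]
    simp only [hterm, Finset.sum_add_distrib, Finset.sum_sub_distrib]
    ring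
  have hgibbs := sum_mul_logb_le_sum_mul_logb (μ.pr_nonneg _) hq_nonneg hq_pos
    (by rw [hq_sum, μ.sum_pr])
  rw [hcross] at hgibbs
  have hH : μ.H (fun ω => (X ω, Y ω, Z ω)) = -∑ t, μ.pr (fun ω => (X ω, Y ω, Z ω)) t
      * Real.logb 2 (μ.pr (fun ω => (X ω, Y ω, Z ω)) t) := rfl
  rw [CI]
  linarith

theorem CI_eq_zero_of_condIndep {X : Ω → A} {Y : Ω → B} {Z : Ω → C}
    (h : μ.CondIndep X Y Z) : μ.CI X Y Z = 0 := by
  rw [CI_eq_sum]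
  refine Finset.sum_eq_zero fun ω _ => ?_
  rcases (μ.nonneg ω).eq_or_lt with hω | hω
  · simp [← hω]
  have hXYZ := hω.trans_le (μ.p_le_pr_apply (fun ω => (X ω, Y ω, Z ω)) ω)
  have hXZ := hω.trans_le (μ.p_le_pr_apply (fun ω => (X ω, Z ω)) ω)
  have hYZ := hω.trans_le (μ.p_le_pr_apply (fun ω => (Y ω, Z ω)) ω)
  have hZ := hω.trans_le (μ.p_le_pr_apply Z ω)
  rw [← Real.logb_mul hXYZ.ne' hZ.ne', h, Real.logb_mul hXZ.ne' hYZ.ne']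
  ring

theorem CI_const_eq_I2 (X : Ω → A) (Y : Ω → B) : μ.CI X Y (fun _ => ()) = μ.I2 X Y := by
  have hconst : μ.H (fun _ => ()) = 0 := by simp [H, pr_const]
  rw [CI, I2, hconst, μ.H_congr (X := fun ω => (X ω, ())) (Y := X) (by simp),
    μ.H_congr (X := fun ω => (Y ω, ())) (Y := Y) (by simp),
    μ.H_congr (X := fun ω => (X ω, Y ω, ())) (Y := fun ω => (X ω, Y ω)) (by simp)]
  ring

theorem I2_nonneg (X : Ω → A) (Y : Ω → B) : 0 ≤ μ.I2 X Y :=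
  μ.CI_const_eq_I2 X Y ▸ μ.CI_nonneg X Y _

theorem I2_eq_zero_of_indep {X : Ω → A} {Y : Ω → B} (h : μ.Indep X Y) : μ.I2 X Y = 0 := by
  rw [← CI_const_eq_I2]
  refine μ.CI_eq_zero_of_condIndep ?_
  rintro a b ⟨⟩
  rw [μ.pr_congr (X := fun ω => (X ω, Y ω, ())) (Y := fun ω => (X ω, Y ω)) (b := (a, b))
      (by simp), μ.pr_const, μ.pr_congr (X := fun ω => (X ω, ())) (Y := X) (b := a) (by simp),
    μ.pr_congr (X := fun ω => (Y ω, ())) (Y := Y) (b := b) (by simp), h, mul_one]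

theorem CI_comm (X : Ω → A) (Y : Ω → B) (Z : Ω → C) : μ.CI X Y Z = μ.CI Y X Z := by
  rw [CI, CI, μ.H_congr (X := fun ω => (X ω, Y ω, Z ω)) (Y := fun ω => (Y ω, X ω, Z ω))
    fun ω ω' => by simp only [Prod.mk.injEq]; tauto]
  ring

theorem CI_le_H_of_indep {X : Ω → A} {Y : Ω → B} (h : μ.Indep X Y) (Z : Ω → C) :
    μ.CI X Y Z ≤ μ.H Z := by
  have hXY : μ.H (fun ω => (X ω, Y ω)) ≤ μ.H (fun ω => (X ω, Y ω, Z ω)) :=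
    μ.H_le_H_of_eq_imp_eq fun ω ω' => by simp only [Prod.mk.injEq]; tauto
  have hXZ := μ.I2_nonneg X Z
  have hYZ := μ.I2_nonneg Y Z
  have hindep := μ.I2_eq_zero_of_indep h
  rw [I2] at hXZ hYZ hindep
  rw [CI]
  linarith

variable {A' B' : Type*} [Fintype A'] [DecidableEq A'] [Fintype B'] [DecidableEq B']

theorem CI_prod_left_eq_add (X' : Ω → A') (X : Ω → A) (Y : Ω → B) (Z : Ω → C) :
    μ.CI (fun ω => (X' ω, X ω)) Y Z
      = μ.CI X' Y Z + μ.CI X Y (fun ω => (Z ω, X' ω)) := by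
  have h₁ : μ.H (fun ω => ((X' ω, X ω), Z ω)) = μ.H (fun ω => (X ω, Z ω, X' ω)) :=
    μ.H_congr fun ω ω' => by simp only [Prod.mk.injEq]; tauto
  have h₂ : μ.H (fun ω => ((X' ω, X ω), Y ω, Z ω)) = μ.H (fun ω => (X ω, Y ω, Z ω, X' ω)) :=
    μ.H_congr fun ω ω' => by simp only [Prod.mk.injEq]; tauto
  have h₃ : μ.H (fun ω => (Y ω, Z ω, X' ω)) = μ.H (fun ω => (X' ω, Y ω, Z ω)) :=
    μ.H_congr fun ω ω' => by simp only [Prod.mk.injEq]; tauto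
  have h₄ : μ.H (fun ω => (Z ω, X' ω)) = μ.H (fun ω => (X' ω, Z ω)) :=
    μ.H_congr fun ω ω' => by simp only [Prod.mk.injEq]; tauto
  rw [CI, CI, CI, h₁, h₂, h₃, h₄]
  ring

theorem CI_prod_right_eq_add (X : Ω → A) (Y' : Ω → B') (Y : Ω → B) (Z : Ω → C) :
    μ.CI X (fun ω => (Y' ω, Y ω)) Z
      = μ.CI X Y' Z + μ.CI X Y (fun ω => (Z ω, Y' ω)) := by
  rw [CI_comm, CI_prod_left_eq_add, CI_comm, μ.CI_comm Y]

theorem CI_le_CI_prod_left (X' : Ω → A') (X : Ω → A) (Y : Ω → B) (Z : Ω → C) :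
    μ.CI X Y Z ≤ μ.CI (fun ω => (X' ω, X ω)) Y Z := by
  have hswap : μ.CI (fun ω => (X' ω, X ω)) Y Z = μ.CI (fun ω => (X ω, X' ω)) Y Z := by
    rw [CI, CI, μ.H_congr (X := fun ω => ((X' ω, X ω), Z ω)) (Y := fun ω => ((X ω, X' ω), Z ω))
        fun ω ω' => by simp only [Prod.mk.injEq]; tauto,
      μ.H_congr (X := fun ω => ((X' ω, X ω), Y ω, Z ω)) (Y := fun ω => ((X ω, X' ω), Y ω, Z ω))
        fun ω ω' => by simp only [Prod.mk.injEq]; tauto]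
  rw [hswap, CI_prod_left_eq_add]
  linarith [μ.CI_nonneg X' Y (fun ω => (Z ω, X ω))]

theorem CI_le_CI_prod_right (X : Ω → A) (Y' : Ω → B') (Y : Ω → B) (Z : Ω → C) :
    μ.CI X Y Z ≤ μ.CI X (fun ω => (Y' ω, Y ω)) Z := by
  rw [CI_comm, μ.CI_comm X]
  exact μ.CI_le_CI_prod_left Y' Y X Z

end Entropy

section Markov

variable {A B C D E : Type*} [DecidableEq A] [DecidableEq B] [DecidableEq C] [DecidableEq D]
  [DecidableEq E]

/-- `p(x, y | m, w₁, w₂) = p(x | m, w₁) p(y | m, w₂)` with the denominators cleared: the Markov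
chain `X − (M, W₁) − (M, W₂) − Y`. -/
def MarkovFactorization (X : Ω → A) (Y : Ω → B) (M : Ω → C) (W₁ : Ω → D) (W₂ : Ω → E) :
    Prop :=
  ∀ x y m w₁ w₂, μ.pr (fun ω => (X ω, Y ω, M ω, W₁ ω, W₂ ω)) (x, y, m, w₁, w₂)
      * μ.pr (fun ω => (M ω, W₁ ω)) (m, w₁) * μ.pr (fun ω => (M ω, W₂ ω)) (m, w₂)
    = μ.pr (fun ω => (M ω, W₁ ω, W₂ ω)) (m, w₁, w₂)
      * μ.pr (fun ω => (X ω, M ω, W₁ ω)) (x, m, w₁) * μ.pr (fun ω => (Y ω, M ω, W₂ ω)) (y, m, w₂)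

variable {μ} {X : Ω → A} {Y : Ω → B} {M : Ω → C} {W₁ : Ω → D} {W₂ : Ω → E}

theorem MarkovFactorization.pr_mul_pr_eq [Fintype A] (h : μ.MarkovFactorization X Y M W₁ W₂)
    (y : B) (m : C) (w₁ : D) (w₂ : E) :
    μ.pr (fun ω => (Y ω, M ω, W₁ ω, W₂ ω)) (y, m, w₁, w₂) * μ.pr (fun ω => (M ω, W₂ ω)) (m, w₂)
      = μ.pr (fun ω => (M ω, W₁ ω, W₂ ω)) (m, w₁, w₂)
        * μ.pr (fun ω => (Y ω, M ω, W₂ ω)) (y, m, w₂) := by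
  have hsum := Finset.sum_congr rfl fun x (_ : x ∈ Finset.univ) => h x y m w₁ w₂
  simp only [← Finset.sum_mul, ← Finset.mul_sum, sum_pr_prod_left] at hsum
  by_cases h₁ : μ.pr (fun ω => (M ω, W₁ ω)) (m, w₁) = 0
  · have h₄ : μ.pr (fun ω => (Y ω, M ω, W₁ ω, W₂ ω)) (y, m, w₁, w₂) = 0 :=
      μ.pr_eq_zero_of_imp (fun ω hω => by simp_all) h₁
    have h₃ : μ.pr (fun ω => (M ω, W₁ ω, W₂ ω)) (m, w₁, w₂) = 0 :=
      μ.pr_eq_zero_of_imp (fun ω hω => by simp_all) h₁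
    rw [h₄, h₃, zero_mul, zero_mul]
  · apply mul_right_cancel₀ h₁
    linear_combination hsum

theorem MarkovFactorization.condIndep_right [Fintype A] (h : μ.MarkovFactorization X Y M W₁ W₂) :
    μ.CondIndep W₁ Y (fun ω => (M ω, W₂ ω)) := by
  rintro w₁ y ⟨m, w₂⟩
  have h₄ : μ.pr (fun ω => (W₁ ω, Y ω, M ω, W₂ ω)) (w₁, y, m, w₂)
      = μ.pr (fun ω => (Y ω, M ω, W₁ ω, W₂ ω)) (y, m, w₁, w₂) :=
    μ.pr_congr fun ω => by simp only [Prod.mk.injEq]; tauto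
  have h₃ : μ.pr (fun ω => (W₁ ω, M ω, W₂ ω)) (w₁, m, w₂)
      = μ.pr (fun ω => (M ω, W₁ ω, W₂ ω)) (m, w₁, w₂) :=
    μ.pr_congr fun ω => by simp only [Prod.mk.injEq]; tauto
  rw [h₄, h₃]
  exact h.pr_mul_pr_eq y m w₁ w₂

theorem MarkovFactorization.condIndep_left [Fintype A] (h : μ.MarkovFactorization X Y M W₁ W₂) :
    μ.CondIndep X (fun ω => (W₂ ω, Y ω)) (fun ω => (M ω, W₁ ω)) := by
  rintro x ⟨w₂, y⟩ ⟨m, w₁⟩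
  have h₅ : μ.pr (fun ω => (X ω, (W₂ ω, Y ω), M ω, W₁ ω)) (x, (w₂, y), m, w₁)
      = μ.pr (fun ω => (X ω, Y ω, M ω, W₁ ω, W₂ ω)) (x, y, m, w₁, w₂) :=
    μ.pr_congr fun ω => by simp only [Prod.mk.injEq]; tauto
  have h₄ : μ.pr (fun ω => ((W₂ ω, Y ω), M ω, W₁ ω)) ((w₂, y), m, w₁)
      = μ.pr (fun ω => (Y ω, M ω, W₁ ω, W₂ ω)) (y, m, w₁, w₂) :=
    μ.pr_congr fun ω => by simp only [Prod.mk.injEq]; tauto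
  rw [h₅, h₄]
  by_cases h₂ : μ.pr (fun ω => (M ω, W₂ ω)) (m, w₂) = 0
  · rw [μ.pr_eq_zero_of_imp (X := fun ω => (X ω, Y ω, M ω, W₁ ω, W₂ ω))
        (fun ω hω => by simp_all) h₂,
      μ.pr_eq_zero_of_imp (X := fun ω => (Y ω, M ω, W₁ ω, W₂ ω)) (fun ω hω => by simp_all) h₂,
      zero_mul, mul_zero]
  · apply mul_right_cancel₀ h₂
    linear_combination h x y m w₁ w₂
      - μ.pr (fun ω => (X ω, M ω, W₁ ω)) (x, m, w₁) * h.pr_mul_pr_eq y m w₁ w₂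

variable [Fintype A] [Fintype B] [Fintype C] [Fintype D] [Fintype E]

theorem CI_le_H_of_markovFactorization (hW : μ.Indep W₁ W₂)
    (h : μ.MarkovFactorization X Y M W₁ W₂) : μ.CI X Y M ≤ μ.H M :=
  calc μ.CI X Y M ≤ μ.CI (fun ω => (W₁ ω, X ω)) (fun ω => (W₂ ω, Y ω)) M :=
        (μ.CI_le_CI_prod_right X W₂ Y M).trans (μ.CI_le_CI_prod_left W₁ X _ M)
    _ = μ.CI W₁ W₂ M + μ.CI W₁ Y (fun ω => (M ω, W₂ ω))
          + μ.CI X (fun ω => (W₂ ω, Y ω)) (fun ω => (M ω, W₁ ω)) := by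
        rw [CI_prod_left_eq_add, CI_prod_right_eq_add]
    _ = μ.CI W₁ W₂ M := by
        rw [μ.CI_eq_zero_of_condIndep h.condIndep_right,
          μ.CI_eq_zero_of_condIndep h.condIndep_left, add_zero, add_zero]
    _ ≤ μ.H M := μ.CI_le_H_of_indep hW M

end Markov

end FinPMF

/-- If `W1 ⊥ W2` and `X^n − (M,W1) − (M,W2) − Y^n`, then
`I(X^n;Y^n|M) ≤ H(M)`; in particular if `M` takes at most `2^{nR}` values then
`I(X^n;Y^n|M) ≤ nR`. -/
theorem stmt2 {Ω 𝒳 𝒴 𝓜 𝒲₁ 𝒲₂ : Type*} [Fintype Ω]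
    [Fintype 𝒳] [DecidableEq 𝒳] [Fintype 𝒴] [DecidableEq 𝒴]
    [Fintype 𝓜] [DecidableEq 𝓜]
    [Fintype 𝒲₁] [DecidableEq 𝒲₁] [Fintype 𝒲₂] [DecidableEq 𝒲₂]
    {n : ℕ}
    (μ : FinPMF Ω) (Xn : Ω → Fin n → 𝒳) (Yn : Ω → Fin n → 𝒴) (M : Ω → 𝓜)
    (W1 : Ω → 𝒲₁) (W2 : Ω → 𝒲₂)
    (hInd : μ.Indep W1 W2)
    (hMarkov : ∀ (x : Fin n → 𝒳) (y : Fin n → 𝒴) (m : 𝓜) (w1 : 𝒲₁) (w2 : 𝒲₂),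
      μ.pr (fun ω => (Xn ω, Yn ω, M ω, W1 ω, W2 ω)) (x, y, m, w1, w2)
          * μ.pr (fun ω => (M ω, W1 ω)) (m, w1)
          * μ.pr (fun ω => (M ω, W2 ω)) (m, w2)
        = μ.pr (fun ω => (M ω, W1 ω, W2 ω)) (m, w1, w2)
          * μ.pr (fun ω => (Xn ω, M ω, W1 ω)) (x, m, w1)
          * μ.pr (fun ω => (Yn ω, M ω, W2 ω)) (y, m, w2)) :
    μ.CI Xn Yn M ≤ μ.H M ∧
      ∀ R : ℝ, (Fintype.card 𝓜 : ℝ) ≤ (2 : ℝ) ^ ((n : ℝ) * R) →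
        μ.CI Xn Yn M ≤ (n : ℝ) * R := by
  have hCI : μ.CI Xn Yn M ≤ μ.H M := μ.CI_le_H_of_markovFactorization hInd hMarkov
  exact ⟨hCI, fun R hR => hCI.trans (μ.H_le_of_card_le_two_rpow M hR)⟩
end

section
/- Let p and p' be probability distributions on a finite set 𝒜 with |𝒜| ≥ 2, and suppose the total variation distance δ = ‖p − p'‖_TV satisfies δ ≤ 1/4. Then |H(p) − H(p')| ≤ 2δ log(|𝒜|) + h(2δ), where h is the binary entropy function. -/
open scoped BigOperators

/-! With `η = negMulLog`, concavity of `η` gives the termwise bound `|η x - η y| ≤ η |x - y|`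
whenever `|x - y| ≤ 1/2`. Summing it over `a` and applying Jensen to `η` with uniform weights
bounds `∑ η |p a - p' a|` by `T log n + η T`, where `T = 2δ` and `n = |𝒜|`; the binary entropy
`h T = η T + η (1 - T)` only adds a nonnegative term. -/

open Real Set

namespace Real

open scoped Finset

lemma negMulLog_add_le {x y : ℝ} (hx : 0 ≤ x) (hy : 0 ≤ y) :
    negMulLog (x + y) ≤ negMulLog x + negMulLog y := by
  have mul_log_le : ∀ {u v : ℝ}, 0 ≤ u → 0 ≤ v → u * log u ≤ u * log (u + v) := by
    intro u v hu hv
    rcases hu.eq_or_lt with rfl | hu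
    · simp
    · exact mul_le_mul_of_nonneg_left (log_le_log hu (by linarith)) hu.le
  have h₁ := mul_log_le hx hy
  have h₂ := mul_log_le hy hx
  rw [add_comm y x] at h₂
  simp only [negMulLog]
  linarith

lemma negMulLog_le_negMulLog_add_add_negMulLog_one_sub {y t : ℝ} (hy : 0 ≤ y) (ht : 0 ≤ t)
    (hyt : y + t ≤ 1) : negMulLog y ≤ negMulLog (y + t) + negMulLog (1 - t) := by
  rcases (show y ≤ 1 by linarith).eq_or_lt with rfl | hy1
  · obtain rfl : t = 0 := by linarith
    simp
  -- `y + t` and `1 - t` are the mixtures `θ • 1 + (1 - θ) • y` and `(1 - θ) • 1 + θ • y`,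
  -- and `negMulLog 1 = 0`.
  set θ := t / (1 - y)
  have hθ0 : 0 ≤ θ := div_nonneg ht (by linarith)
  have hθ1 : θ ≤ 1 := (div_le_one (by linarith)).2 (by linarith)
  have hmix₁ : θ • (1 : ℝ) + (1 - θ) • y = y + t := by
    simp only [θ, smul_eq_mul]; field_simp; ring
  have hmix₂ : (1 - θ) • (1 : ℝ) + θ • y = 1 - t := by
    simp only [θ, smul_eq_mul]; field_simp; ring
  have hθ' : 0 ≤ 1 - θ := by linarith
  have h₁ := concaveOn_negMulLog.2 (mem_Ici.2 zero_le_one) (mem_Ici.2 hy) hθ0 hθ' (by ring)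
  have h₂ := concaveOn_negMulLog.2 (mem_Ici.2 zero_le_one) (mem_Ici.2 hy) hθ' hθ0 (by ring)
  rw [hmix₁] at h₁
  rw [hmix₂] at h₂
  simp only [smul_eq_mul, negMulLog_one, mul_zero, zero_add] at h₁ h₂
  linarith

lemma negMulLog_one_sub_le_negMulLog {t : ℝ} (ht₀ : 0 ≤ t) (ht : t ≤ 1 / 2) :
    negMulLog (1 - t) ≤ negMulLog t := by
  set φ : ℝ → ℝ := fun x ↦ negMulLog x - negMulLog (1 - x)
  have hφ' : ∀ x ∈ Ioo (0 : ℝ) (1 / 2), HasDerivAt φ (-log (x * (1 - x)) - 2) x := by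
    rintro x ⟨hx₀, hx⟩
    have h : HasDerivAt φ (-log x - 1 - (-log (1 - x) - 1) * -1) x :=
      (hasDerivAt_negMulLog hx₀.ne').sub
        ((hasDerivAt_negMulLog (by linarith)).comp x ((hasDerivAt_id x).const_sub 1))
    exact h.congr_deriv (by rw [log_mul hx₀.ne' (by linarith)]; ring)
  -- `x (1 - x)` increases on `(0, 1/2)`, so `φ` is concave there, and `φ 0 = φ (1/2) = 0`.
  have hconc : ConcaveOn ℝ (Icc 0 (1 / 2)) φ := by
    refine AntitoneOn.concaveOn_of_deriv (convex_Icc _ _) (by fun_prop) ?_ ?_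
    · rw [interior_Icc]
      exact fun x hx ↦ (hφ' x hx).differentiableAt.differentiableWithinAt
    · rw [interior_Icc]
      intro a ha b hb hab
      rw [(hφ' a ha).deriv, (hφ' b hb).deriv]
      have : log (a * (1 - a)) ≤ log (b * (1 - b)) :=
        log_le_log (mul_pos ha.1 (by linarith [ha.2])) (by nlinarith [ha.2, hb.2])
      linarith
  have := hconc.ge_on_segment (x := 0) (y := 1 / 2) (by norm_num) (by norm_num)
    (by rw [segment_eq_Icc (by norm_num)]; exact ⟨ht₀, ht⟩)
  norm_num [φ] at this
  linarith

lemma abs_negMulLog_sub_le {x y : ℝ} (hx₀ : 0 ≤ x) (hx₁ : x ≤ 1) (hy₀ : 0 ≤ y) (hy₁ : y ≤ 1)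
    (hxy : |x - y| ≤ 1 / 2) : |negMulLog x - negMulLog y| ≤ negMulLog |x - y| := by
  wlog hyx : y ≤ x generalizing x y
  · rw [abs_sub_comm, abs_sub_comm x]
    exact this hy₀ hy₁ hx₀ hx₁ (abs_sub_comm x y ▸ hxy) (by linarith)
  rw [abs_of_nonneg (sub_nonneg.2 hyx)] at hxy ⊢
  have hsplit : y + (x - y) = x := by ring
  have hupper := negMulLog_add_le hy₀ (sub_nonneg.2 hyx)
  have hlower := negMulLog_le_negMulLog_add_add_negMulLog_one_sub hy₀ (sub_nonneg.2 hyx)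
    (by linarith)
  have hsymm := negMulLog_one_sub_le_negMulLog (sub_nonneg.2 hyx) hxy
  rw [hsplit] at hupper hlower
  exact abs_le.2 ⟨by linarith, by linarith⟩

lemma sum_negMulLog_le {ι : Type*} (s : Finset ι) {t : ι → ℝ} (ht : ∀ i ∈ s, 0 ≤ t i) :
    ∑ i ∈ s, negMulLog (t i) ≤
      (∑ i ∈ s, t i) * log #s + negMulLog (∑ i ∈ s, t i) := by
  rcases s.eq_empty_or_nonempty with rfl | hs
  · simp
  set n : ℝ := ↑(#s)
  have hn : 0 < n := by positivity
  have hjensen := concaveOn_negMulLog.le_map_sum (t := s) (w := fun _ ↦ n⁻¹) (p := t)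
    (fun _ _ ↦ by positivity) (by simp [n, hn.ne']) (fun i hi ↦ mem_Ici.2 (ht i hi))
  simp only [smul_eq_mul, ← Finset.mul_sum] at hjensen
  have hscale : n * negMulLog (n⁻¹ * ∑ i ∈ s, t i) =
      (∑ i ∈ s, t i) * log n + negMulLog (∑ i ∈ s, t i) := by
    rw [negMulLog_mul, negMulLog, log_inv]
    field_simp
  calc ∑ i ∈ s, negMulLog (t i) = n * (n⁻¹ * ∑ i ∈ s, negMulLog (t i)) := by field_simp
    _ ≤ n * negMulLog (n⁻¹ * ∑ i ∈ s, t i) := mul_le_mul_of_nonneg_left hjensen hn.le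
    _ = _ := hscale

lemma neg_mul_logb_eq_negMulLog_div (b x : ℝ) : -(x * logb b x) = negMulLog x / log b := by
  rw [logb, negMulLog]
  ring

end Real

open Real

lemma binEnt_eq_binEntropy_div (t : ℝ) : binEnt t = binEntropy t / log 2 := by
  rw [binEnt, binEntropy_eq_negMulLog_add_negMulLog_one_sub, add_div,
    ← neg_mul_logb_eq_negMulLog_div, ← neg_mul_logb_eq_negMulLog_div]
  ring

theorem abs_sum_negMulLog_sub_le {ι : Type*} [Fintype ι] {p q : ι → ℝ}
    (hp₀ : ∀ i, 0 ≤ p i) (hp₁ : ∑ i, p i = 1) (hq₀ : ∀ i, 0 ≤ q i) (hq₁ : ∑ i, q i = 1)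
    (hpq : ∑ i, |p i - q i| ≤ 1 / 2) :
    |∑ i, negMulLog (p i) - ∑ i, negMulLog (q i)| ≤
      (∑ i, |p i - q i|) * log (Fintype.card ι) + binEntropy (∑ i, |p i - q i|) := by
  have le_one : ∀ {r : ι → ℝ}, (∀ i, 0 ≤ r i) → ∑ i, r i = 1 → ∀ i, r i ≤ 1 :=
    fun hr₀ hr₁ i ↦ hr₁ ▸ Finset.single_le_sum (fun j _ ↦ hr₀ j) (Finset.mem_univ i)
  have hterm : ∀ i, |p i - q i| ≤ 1 / 2 := fun i ↦
    (Finset.single_le_sum (fun j _ ↦ abs_nonneg (p j - q j)) (Finset.mem_univ i)).trans hpq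
  have hrest : 0 ≤ negMulLog (1 - ∑ i, |p i - q i|) := negMulLog_nonneg (by linarith)
    (by linarith [Finset.sum_nonneg fun i (_ : i ∈ Finset.univ) ↦ abs_nonneg (p i - q i)])
  calc |∑ i, negMulLog (p i) - ∑ i, negMulLog (q i)|
      ≤ ∑ i, |negMulLog (p i) - negMulLog (q i)| := by
        rw [← Finset.sum_sub_distrib]
        exact Finset.abs_sum_le_sum_abs _ _
    _ ≤ ∑ i, negMulLog |p i - q i| := Finset.sum_le_sum fun i _ ↦
        abs_negMulLog_sub_le (hp₀ i) (le_one hp₀ hp₁ i) (hq₀ i) (le_one hq₀ hq₁ i) (hterm i)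
    _ ≤ (∑ i, |p i - q i|) * log (Fintype.card ι) + negMulLog (∑ i, |p i - q i|) :=
        sum_negMulLog_le Finset.univ fun i _ ↦ abs_nonneg _
    _ ≤ _ := by
        rw [binEntropy_eq_negMulLog_add_negMulLog_one_sub]
        linarith

theorem stmt5_general {A : Type*} [Fintype A]
    (p p' : A → ℝ)
    (hp0 : ∀ a, 0 ≤ p a) (hp1 : ∑ a, p a = 1)
    (hp'0 : ∀ a, 0 ≤ p' a) (hp'1 : ∑ a, p' a = 1)
    (δ : ℝ) (hδ : δ = (1 / 2 : ℝ) * ∑ a, |p a - p' a|) (hδ4 : δ ≤ 1 / 4) :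
    |(-∑ a, p a * Real.logb 2 (p a)) - (-∑ a, p' a * Real.logb 2 (p' a))|
      ≤ 2 * δ * Real.logb 2 (Fintype.card A) + binEnt (2 * δ) := by
  have htv : ∑ a, |p a - p' a| = 2 * δ := by rw [hδ]; ring
  have hbits : ∀ q : A → ℝ, -∑ a, q a * logb 2 (q a) = (∑ a, negMulLog (q a)) / log 2 := by
    intro q
    rw [← Finset.sum_neg_distrib, Finset.sum_div]
    exact Finset.sum_congr rfl fun a _ ↦ neg_mul_logb_eq_negMulLog_div 2 (q a)
  rw [hbits, hbits, ← sub_div, abs_div, abs_of_pos (log_pos one_lt_two), binEnt_eq_binEntropy_div,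
    logb, mul_div_assoc', ← add_div, div_le_div_iff_of_pos_right (log_pos one_lt_two),
    ← htv]
  exact abs_sum_negMulLog_sub_le hp0 hp1 hp'0 hp'1 (by linarith)

/-- Uniform continuity of entropy in total variation distance
(Cover–Thomas Thm 17.3.3 variant): if `δ = ‖p − p'‖_TV ≤ 1/4` then
`|H(p) − H(p')| ≤ 2δ log₂|𝒜| + h(2δ)`. -/
theorem stmt5 {A : Type*} [Fintype A] [DecidableEq A] (hA : 2 ≤ Fintype.card A)
    (p p' : A → ℝ)
    (hp0 : ∀ a, 0 ≤ p a) (hp1 : ∑ a, p a = 1)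
    (hp'0 : ∀ a, 0 ≤ p' a) (hp'1 : ∑ a, p' a = 1)
    (δ : ℝ) (hδ : δ = (1 / 2 : ℝ) * ∑ a, |p a - p' a|) (hδ4 : δ ≤ 1 / 4) :
    |(-∑ a, p a * Real.logb 2 (p a)) - (-∑ a, p' a * Real.logb 2 (p' a))|
      ≤ 2 * δ * Real.logb 2 (Fintype.card A) + binEnt (2 * δ) :=
  stmt5_general p p' hp0 hp1 hp'0 hp'1 δ hδ hδ4
end

section
/- Let (X,Y) be DSBS(a) with a ∈ (0, 1/2), let b = (1 − √(1−2a))/2, and define U ∈ {0,1} by the conditional kernel p*(0|0,1) = p*(1|1,0) = 1/2 and p*(0|1,1) = p*(1|0,0) = b²/(1−a) (with the complementary probabilities determined). Then under the joint distribution q(x,y) p*(u|x,y), X and Y are conditionally independent given U (i.e., X − U − Y is a Markov chain), and I(X,Y;U) = 1 + h(a) − 2h(b). -/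
open scoped BigOperators

/-
With `a = 2b(1 - b)` the law `q(x,y) p*(u|x,y)` factors as `½ W(x|u) W(y|u)`, where `W` is the
binary symmetric channel with crossover probability `b`: `U` is uniform and `X`, `Y` are
independent outputs of `W` on input `U`. The Markov chain is then immediate, and
`H(U) = 1`, `H(X,Y) = 1 + h(a)`, `H(X,Y,U) = 1 + 2h(b)`.
-/

open Real

noncomputable def bsc (b : ℝ) (x u : Bool) : ℝ := if x = u then 1 - b else b

lemma FinPMF.pr_apply_of_injective {Ω A : Type*} [Fintype Ω] [DecidableEq A] (μ : FinPMF Ω)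
    {X : Ω → A} (hX : X.Injective) (ω : Ω) : μ.pr X (X ω) = μ.p ω := by
  classical
  simp [FinPMF.pr, hX.eq_iff]

lemma div_two_mul_logb_div_two (t : ℝ) : t / 2 * logb 2 (t / 2) = (t * logb 2 t - t) / 2 := by
  rcases eq_or_ne t 0 with rfl | ht
  · simp
  · rw [logb_div ht two_ne_zero, logb_self_eq_one one_lt_two]
    ring

-- `logb 2 0 = 0` makes this hold without any positivity assumption.
lemma mul_mul_logb_mul (x y : ℝ) :
    x * y * logb 2 (x * y) = x * y * logb 2 x + x * y * logb 2 y := by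
  rcases eq_or_ne x 0 with rfl | hx
  · simp
  rcases eq_or_ne y 0 with rfl | hy
  · simp
  rw [logb_mul hx hy]
  ring

lemma eq_two_mul_mul_one_sub_of_eq_one_sub_sqrt {a b : ℝ} (ha : 2 * a ≤ 1)
    (hb : b = (1 - √(1 - 2 * a)) / 2) : a = 2 * b * (1 - b) := by
  have hsq : √(1 - 2 * a) ^ 2 = 1 - 2 * a := sq_sqrt (by linarith)
  have hs : √(1 - 2 * a) = 1 - 2 * b := by rw [hb]; ring
  rw [hs] at hsq
  linarith

lemma dsbs_mul_wynerChannel_eq_bsc {a b : ℝ} (hab : a = 2 * b * (1 - b)) (x y u : Bool) :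
    (if x = y then (1 - a) / 2 else a / 2) *
        (if x = y then (if u = x then 1 - b ^ 2 / (1 - a) else b ^ 2 / (1 - a)) else 1 / 2) =
      bsc b x u * bsc b y u / 2 := by
  have h1a : 1 - a = (1 - b) ^ 2 + b ^ 2 := by rw [hab]; ring
  have h1a_ne : 1 - a ≠ 0 := by nlinarith [sq_nonneg (2 * b - 1)]
  cases x <;> cases y <;> cases u <;>
    simp only [bsc, ↓reduceIte, Bool.true_eq_false, Bool.false_eq_true] <;> field_simp <;> linarith

def FinPMF.IsBSCPair (μ : FinPMF (Bool × Bool × Bool)) (b : ℝ) : Prop :=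
  ∀ x y u, μ.p (x, y, u) = bsc b x u * bsc b y u / 2

namespace FinPMF.IsBSCPair

variable {b : ℝ} {μ : FinPMF (Bool × Bool × Bool)}

lemma p_apply (hμ : μ.IsBSCPair b) (x y u : Bool) : μ.p (x, y, u) = bsc b x u * bsc b y u / 2 :=
  hμ x y u

lemma pr_u (hμ : μ.IsBSCPair b) (u : Bool) : μ.pr (fun z => z.2.2) u = 1 / 2 := by
  cases u <;>
    simp only [FinPMF.pr, Fintype.sum_prod_type, Fintype.sum_bool, hμ.p_apply, bsc,
      Bool.true_eq_false, Bool.false_eq_true, ↓reduceIte] <;> ring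

lemma pr_xu (hμ : μ.IsBSCPair b) (x u : Bool) :
    μ.pr (fun z => (z.1, z.2.2)) (x, u) = bsc b x u / 2 := by
  cases x <;> cases u <;>
    simp only [FinPMF.pr, Fintype.sum_prod_type, Fintype.sum_bool, Prod.mk.injEq, hμ.p_apply, bsc,
      Bool.true_eq_false, Bool.false_eq_true, and_true, and_false, ↓reduceIte] <;> ring

lemma pr_yu (hμ : μ.IsBSCPair b) (y u : Bool) :
    μ.pr (fun z => (z.2.1, z.2.2)) (y, u) = bsc b y u / 2 := by
  cases y <;> cases u <;>
    simp only [FinPMF.pr, Fintype.sum_prod_type, Fintype.sum_bool, Prod.mk.injEq, hμ.p_apply, bsc,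
      Bool.true_eq_false, Bool.false_eq_true, and_true, and_false, ↓reduceIte] <;> ring

lemma pr_xy (hμ : μ.IsBSCPair b) (x y : Bool) :
    μ.pr (fun z => (z.1, z.2.1)) (x, y) =
      if x = y then (1 - 2 * b * (1 - b)) / 2 else 2 * b * (1 - b) / 2 := by
  cases x <;> cases y <;>
    simp only [FinPMF.pr, Fintype.sum_prod_type, Fintype.sum_bool, Prod.mk.injEq, hμ.p_apply, bsc,
      Bool.true_eq_false, Bool.false_eq_true, and_true, and_false, ↓reduceIte] <;> ring

lemma pr_xyu (hμ : μ.IsBSCPair b) (x y u : Bool) :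
    μ.pr (fun z => ((z.1, z.2.1), z.2.2)) ((x, y), u) = bsc b x u * bsc b y u / 2 :=
  (μ.pr_apply_of_injective (X := fun z => ((z.1, z.2.1), z.2.2))
    (fun _ _ h => by simpa [Prod.ext_iff, and_assoc] using h) (x, y, u)).trans (hμ x y u)

lemma condIndep (hμ : μ.IsBSCPair b) :
    μ.CondIndep (fun z => z.1) (fun z => z.2.1) (fun z => z.2.2) := by
  intro x y u
  rw [show μ.pr (fun z => (z.1, z.2.1, z.2.2)) (x, y, u) = μ.p (x, y, u) from
    μ.pr_apply_of_injective (X := fun z => (z.1, z.2.1, z.2.2)) (fun _ _ h => h) (x, y, u),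
    hμ, hμ.pr_u, hμ.pr_xu, hμ.pr_yu]
  ring

lemma H_u (hμ : μ.IsBSCPair b) : μ.H (fun z => z.2.2) = 1 := by
  simp only [FinPMF.H, Fintype.sum_bool, hμ.pr_u, div_two_mul_logb_div_two, logb_one]
  ring

lemma H_xy (hμ : μ.IsBSCPair b) :
    μ.H (fun z => (z.1, z.2.1)) = 1 + binEnt (2 * b * (1 - b)) := by
  simp only [FinPMF.H, Fintype.sum_prod_type, Fintype.sum_bool, hμ.pr_xy, ↓reduceIte,
    Bool.true_eq_false, Bool.false_eq_true, div_two_mul_logb_div_two, binEnt]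
  ring

lemma H_xyu (hμ : μ.IsBSCPair b) :
    μ.H (fun z => ((z.1, z.2.1), z.2.2)) = 1 + 2 * binEnt b := by
  simp only [FinPMF.H, Fintype.sum_prod_type, Fintype.sum_bool, hμ.pr_xyu,
    div_two_mul_logb_div_two, mul_mul_logb_mul, binEnt]
  simp only [bsc, ↓reduceIte, Bool.true_eq_false, Bool.false_eq_true]
  ring

end FinPMF.IsBSCPair

/-- For DSBS(a), `a ∈ (0,1/2)`, with `b = (1 − √(1−2a))/2` and Wyner's
optimal test channel `p*(u|x,y)` (probability `1/2` each when `x ≠ y`; probability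
`b²/(1−a)` of `u ≠ x` when `x = y`), the joint distribution `q(x,y)p*(u|x,y)` makes
`X − U − Y` a Markov chain and `I(X,Y;U) = 1 + h(a) − 2h(b)`. -/
theorem stmt11 (a b : ℝ) (ha : a ∈ Set.Ioo (0 : ℝ) (1 / 2))
    (hb : b = (1 - Real.sqrt (1 - 2 * a)) / 2)
    (μ : FinPMF (Bool × Bool × Bool))
    (hμ : ∀ z : Bool × Bool × Bool,
      μ.p z = (if z.1 = z.2.1 then (1 - a) / 2 else a / 2) *
        (if z.1 = z.2.1 then
          (if z.2.2 = z.1 then 1 - b ^ 2 / (1 - a) else b ^ 2 / (1 - a))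
         else 1 / 2)) :
    μ.CondIndep (fun z => z.1) (fun z => z.2.1) (fun z => z.2.2) ∧
      μ.I2 (fun z => (z.1, z.2.1)) (fun z => z.2.2) = 1 + binEnt a - 2 * binEnt b := by
  have hab : a = 2 * b * (1 - b) :=
    eq_two_mul_mul_one_sub_of_eq_one_sub_sqrt (by linarith [ha.2]) hb
  have hbsc : μ.IsBSCPair b := fun x y u =>
    (hμ (x, y, u)).trans (dsbs_mul_wynerChannel_eq_bsc hab x y u)
  refine ⟨hbsc.condIndep, ?_⟩
  rw [FinPMF.I2, hbsc.H_xy, hbsc.H_u, hbsc.H_xyu, ← hab]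
  ring
end

section
/- Let a ∈ (0, 1/2), b = (1 − √(1−2a))/2, and for t ∈ [0,1] let α(t) = (1−t) b² + (t/2)(1−a). Define t* = ( h⁻¹((1+h(a))/2) − a/2 − b² ) / ( (1−a)/2 − b² ), where h⁻¹ : [0,1] → [0,1/2] is the inverse of the binary entropy function restricted to [0,1/2]. Then t* ∈ [0,1] and 1 + h(a) = 2 h( α(t*) + a/2 ). -/
/-! With `s = √(1 - 2a)` one has `b = (1 - s)/2`, hence `a = 2b(1 - b)`. This collapses the
normalizing constants: `(1 - a)/2 - b² = 1/2 - b` and `a/2 + b² = b`, so `t* = (y - b)/(1/2 - b)`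
and `α(t*) + a/2 = y`, which turns the entropy identity into the defining equation of `y`.
Membership `t* ∈ [0,1]` amounts to `b ≤ y ≤ 1/2`; the lower bound holds because `b ≤ a`, so
`h(b) ≤ h(a) ≤ (1 + h(a))/2 = h(y)`, and `h` is strictly increasing on `[0, 1/2]`. -/

open scoped BigOperators

open Set

lemma binEnt_eq_binEntropy_div_log_two (t : ℝ) : binEnt t = Real.binEntropy t / Real.log 2 := by
  simp only [binEnt, Real.binEntropy, Real.logb, Real.log_inv]
  ring

lemma binEnt_strictMonoOn : StrictMonoOn binEnt (Icc 0 (1 / 2)) := by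
  intro x hx y hy hxy
  rw [binEnt_eq_binEntropy_div_log_two, binEnt_eq_binEntropy_div_log_two]
  rw [one_div] at hx hy
  exact div_lt_div_of_pos_right (Real.binEntropy_strictMonoOn hx hy hxy)
    (Real.log_pos one_lt_two)

lemma binEnt_le_one (t : ℝ) : binEnt t ≤ 1 := by
  rw [binEnt_eq_binEntropy_div_log_two, div_le_one (Real.log_pos one_lt_two)]
  exact Real.binEntropy_le_log_two

lemma eq_two_mul_mul_one_sub_of_eq_sqrt {a b : ℝ} (ha : a ∈ Ioo (0 : ℝ) (1 / 2))
    (hb : b = (1 - √(1 - 2 * a)) / 2) : b ∈ Ioo (0 : ℝ) (1 / 2) ∧ a = 2 * b * (1 - b) := by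
  obtain ⟨ha0, ha2⟩ := ha
  have hs0 : 0 < √(1 - 2 * a) := Real.sqrt_pos.2 (by linarith)
  have hss : √(1 - 2 * a) ^ 2 = 1 - 2 * a := Real.sq_sqrt (by linarith)
  have hs1 : √(1 - 2 * a) < 1 := by nlinarith
  subst hb
  exact ⟨⟨by linarith, by linarith⟩, by linear_combination hss / 2⟩

lemma time_sharing_point_eq {a b : ℝ} (hab : a = 2 * b * (1 - b)) (t : ℝ) :
    (1 - t) * b ^ 2 + (t / 2) * (1 - a) + a / 2 = b + t * (1 / 2 - b) := by
  subst hab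
  ring

lemma time_sharing_param_eq {a b : ℝ} (hab : a = 2 * b * (1 - b)) (y : ℝ) :
    (y - a / 2 - b ^ 2) / ((1 - a) / 2 - b ^ 2) = (y - b) / (1 / 2 - b) := by
  subst hab
  ring_nf

/-- For `a ∈ (0,1/2)`, `b = (1−√(1−2a))/2`, `α(t) = (1−t)b² + (t/2)(1−a)`,
and `t* = (h⁻¹((1+h(a))/2) − a/2 − b²)/((1−a)/2 − b²)` (where `y = h⁻¹((1+h(a))/2)` is
characterized by `y ∈ [0,1/2]` and `h(y) = (1+h(a))/2`), we have `t* ∈ [0,1]` and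
`1 + h(a) = 2 h(α(t*) + a/2)`. -/
theorem stmt16 (a b y tstar : ℝ) (ha : a ∈ Set.Ioo (0 : ℝ) (1 / 2))
    (hb : b = (1 - Real.sqrt (1 - 2 * a)) / 2)
    (hy1 : y ∈ Set.Icc (0 : ℝ) (1 / 2)) (hy2 : binEnt y = (1 + binEnt a) / 2)
    (ht : tstar = (y - a / 2 - b ^ 2) / ((1 - a) / 2 - b ^ 2)) :
    tstar ∈ Set.Icc (0 : ℝ) 1 ∧
      1 + binEnt a = 2 * binEnt ((1 - tstar) * b ^ 2 + (tstar / 2) * (1 - a) + a / 2) := by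
  obtain ⟨⟨hb0, hb12⟩, hab⟩ := eq_two_mul_mul_one_sub_of_eq_sqrt ha hb
  have hb_mem : b ∈ Icc (0 : ℝ) (1 / 2) := ⟨hb0.le, hb12.le⟩
  have hba : b ≤ a := by nlinarith
  have hby : b ≤ y := by
    have hhba := binEnt_strictMonoOn.monotoneOn hb_mem ⟨ha.1.le, ha.2.le⟩ hba
    exact (binEnt_strictMonoOn.le_iff_le hb_mem hy1).1 (by linarith [binEnt_le_one a])
  have hden : (0 : ℝ) < 1 / 2 - b := by linarith
  rw [ht, time_sharing_param_eq hab, time_sharing_point_eq hab,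
    div_mul_cancel₀ _ hden.ne', add_sub_cancel, hy2]
  exact ⟨⟨div_nonneg (by linarith) hden.le, div_le_one_of_le₀ (by linarith [hy1.2]) hden.le⟩,
    by ring⟩
end
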